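/- arXiv:1906.06602 — 3 statements merged into one kernel-verified Lean document; each statement's English description precedes it below -/
import Mathlib

section
/- Any solution x of x'' + α x + x³ = 0 satisfying x(t + p/2) = -x(t) for all t is a solution of the delayed equation x''(t) + a x(t) + b x(t - T) + x(t)³ = 0, whenever T = n·p/2 with n a positive integer and α = a + (-1)^n b. -/
theorem stmt_1 (a b α p T : ℝ) (hp : 0 < p) (n : ℕ) (hn : 0 < n)
    (x : ℝ → ℝ) (hx1 : Differentiable ℝ x) (hx2 : Differentiable ℝ (deriv x))
    (heq : ∀ t, deriv (deriv x) t + α * x t + (x t) ^ 3 = 0)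
    (hanti : ∀ t, x (t + p / 2) = - x t)
    (hT : T = n * p / 2)
    (hα : α = a + (-1 : ℝ) ^ n * b) :
    ∀ t, deriv (deriv x) t + a * x t + b * x (t - T) + (x t) ^ 3 = 0 := by
  have key : ∀ (k : ℕ) (s : ℝ), x (s + k * (p / 2)) = (-1 : ℝ) ^ k * x s := by
    intro k
    induction k with
    | zero => intro s; simp
    | succ k ih =>
      intro s
      have : s + (k + 1 : ℕ) * (p / 2) = (s + k * (p / 2)) + p / 2 := by
        push_cast; ring
      rw [this, hanti, ih]
      ring
  intro t
  have hx : x t = (-1 : ℝ) ^ n * x (t - T) := by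
    have := key n (t - T)
    rw [hT] at *
    have heqs : t - n * p / 2 + n * (p / 2) = t := by ring
    rw [heqs] at this
    linarith [this]
  have h2 : x (t - T) = (-1 : ℝ) ^ n * x t := by
    rw [hx]
    rw [← mul_assoc, ← pow_add, ← two_mul, pow_mul]
    norm_num
  have := heq t
  rw [h2]
  rw [hα] at this
  linear_combination this
end

section
/- With x = x_*(t) the solution of x'' + x³ = 0, x(0)=1, x'(0)=0, the fundamental matrix of the linearization y'' + 3x² y = 0 with W(0) = id is explicitly W_*(t) = [[x + t x', -x'], [2x' + t x'', -x'']], where all entries are evaluated at t. -/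
/-!
The columns of `W` solve the linear equation `y'' = -3 x(t)² y`, whose coefficient is continuous,
so they are determined by their initial data: on every bounded time interval the system is
Lipschitz with a uniform constant. Two explicit solutions come from the symmetries of
`x'' = -x³`: differentiating the time translates `x(t + h)` in `h` gives `x'`, and
differentiating the rescalings `λ x(λ t)` in `λ` at `λ = 1` gives `x + t x'`. At `t = 0`,
`x + t x'` and `-x'` have data `(1, 0)` and `(0, 1)`, whence the two columns.
-/

open Set

theorem lipschitzWith_companion (c : ℝ) :
    LipschitzWith (max 1 ‖c‖₊) fun p : ℝ × ℝ => (p.2, c * p.1) := by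
  simpa using LipschitzWith.prod_snd.prodMk
    ((lipschitzWith_smul c).comp LipschitzWith.prod_fst :
      LipschitzWith (‖c‖₊ * 1) fun p : ℝ × ℝ => c * p.1)

theorem ODE_linear_second_order_solution_unique {q : ℝ → ℝ} (hq : Continuous q)
    {f g : ℝ → ℝ × ℝ} (hf : ∀ t, HasDerivAt f ((f t).2, q t * (f t).1) t)
    (hg : ∀ t, HasDerivAt g ((g t).2, q t * (g t).1) t) {t₀ : ℝ} (heq : f t₀ = g t₀) :
    f = g := by
  ext1 t
  obtain ⟨R, ht, ht₀⟩ : ∃ R, |t| < R ∧ |t₀| < R :=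
    ⟨|t| + |t₀| + 1, by linarith [abs_nonneg t₀], by linarith [abs_nonneg t]⟩
  obtain ⟨C, hC⟩ := (isCompact_Icc (a := -R) (b := R)).exists_bound_of_continuousOn hq.continuousOn
  have hlip : ∀ s ∈ Ioo (-R) R,
      LipschitzOnWith (max 1 C.toNNReal) (fun p : ℝ × ℝ => (p.2, q s * p.1)) univ := by
    intro s hs
    refine ((lipschitzWith_companion (q s)).weaken (max_le_max le_rfl ?_)).lipschitzOnWith
    rw [← NNReal.coe_le_coe, coe_nnnorm, Real.coe_toNNReal']
    exact (hC s (Ioo_subset_Icc_self hs)).trans (le_max_left _ _)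
  exact ODE_solution_unique_of_mem_Ioo hlip (abs_lt.mp ht₀)
    (fun s _ => ⟨hf s, trivial⟩) (fun s _ => ⟨hg s, trivial⟩) heq (abs_lt.mp ht)

section CubicOscillator

variable {x x' : ℝ → ℝ} (hx : ∀ t, HasDerivAt x (x' t) t)
  (hx' : ∀ t, HasDerivAt x' (-x t ^ 3) t)
include hx hx'

theorem hasDerivAt_scaling_variation (t : ℝ) :
    HasDerivAt (fun s => (x s + s * x' s, 2 * x' s + s * -x s ^ 3))
      ((2 * x' t + t * -x t ^ 3), -3 * x t ^ 2 * (x t + t * x' t)) t := by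
  refine ((hx t).add ((hasDerivAt_id t).mul (hx' t))).prodMk
    (((hx' t).const_mul 2).add ((hasDerivAt_id t).mul ((hx t).fun_pow 3).fun_neg))
    |>.congr_deriv (Prod.ext ?_ ?_) <;> simp only [id] <;> push_cast <;> ring

theorem hasDerivAt_time_variation (t : ℝ) :
    HasDerivAt (fun s => (-x' s, -(-x s ^ 3))) (-(-x t ^ 3), -3 * x t ^ 2 * -x' t) t := by
  refine ((hx' t).neg.prodMk ((hx t).fun_pow 3).fun_neg.fun_neg).congr_deriv (Prod.ext rfl ?_)
  push_cast
  ring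

end CubicOscillator

theorem stmt_13 (x : ℝ → ℝ)
    (hx1 : Differentiable ℝ x) (hx2 : Differentiable ℝ (deriv x))
    (heq : ∀ t, deriv (deriv x) t = -(x t) ^ 3)
    (h0 : x 0 = 1) (h0' : deriv x 0 = 0)
    (W : ℝ → Matrix (Fin 2) (Fin 2) ℝ) (hW0 : W 0 = 1)
    (hW1 : ∀ j t, HasDerivAt (fun s => W s 0 j) (W t 1 j) t)
    (hW2 : ∀ j t, HasDerivAt (fun s => W s 1 j) (-3 * (x t) ^ 2 * W t 0 j) t) :
    ∀ t, W t = !![x t + t * deriv x t, -deriv x t;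
                  2 * deriv x t + t * deriv (deriv x) t, -deriv (deriv x) t] := by
  have hx : ∀ t, HasDerivAt x (deriv x t) t := fun t => (hx1 t).hasDerivAt
  have hx' : ∀ t, HasDerivAt (deriv x) (-x t ^ 3) t := fun t => heq t ▸ (hx2 t).hasDerivAt
  have hq : Continuous fun t => -3 * x t ^ 2 := by have := hx1.continuous; fun_prop
  have col0 := ODE_linear_second_order_solution_unique hq (fun t => (hW1 0 t).prodMk (hW2 0 t))
    (hasDerivAt_scaling_variation hx hx') (t₀ := 0) (by simp [hW0, h0, h0'])
  have col1 := ODE_linear_second_order_solution_unique hq (fun t => (hW1 1 t).prodMk (hW2 1 t))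
    (hasDerivAt_time_variation hx hx') (t₀ := 0) (by simp [hW0, h0, h0'])
  intro t
  have hcol0 := congrFun col0 t
  have hcol1 := congrFun col1 t
  simp only [Prod.mk.injEq] at hcol0 hcol1
  ext i j
  fin_cases i <;> fin_cases j <;> simp [hcol0, hcol1, heq]
end

section
/- Let η_* = iω with ω ∈ ℝ, ω ≠ 0, and suppose η_*² - 2(exp((2T/p_*) η_*) - 1) τ_* = 0 with T, p_* > 0 and τ_* = -(1/24) p_*² β for a real β. Then necessarily (2T/p_*) ω = kπ for some nonzero integer k, k is odd, ω² = -(1/6) p_*² β (so β < 0), and (2/3)(-β) T² = k² π². In particular, if 0 < -β T² < (3/2)π², no such ω exists. -/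
theorem stmt_16 (T p β ω : ℝ) (hT : 0 < T) (hp : 0 < p) (hω : ω ≠ 0)
    (τ : ℝ) (hτ : τ = -(1/24) * p ^ 2 * β)
    (heq : (Complex.I * ω) ^ 2
        = 2 * (Complex.exp ((2 * T / p : ℝ) * (Complex.I * ω)) - 1) * (τ : ℂ)) :
    (∃ k : ℤ, k ≠ 0 ∧ Odd k ∧ (2 * T / p) * ω = k * Real.pi ∧
      ω ^ 2 = -(1/6) * p ^ 2 * β ∧
      (2/3) * (-β) * T ^ 2 = (k : ℝ) ^ 2 * Real.pi ^ 2) ∧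
    β < 0 ∧ (3/2) * Real.pi ^ 2 ≤ -β * T ^ 2 := by
  set θ : ℝ := 2 * T / p * ω with hθ
  have hω2 : 0 < ω ^ 2 := by positivity
  have hz : ((2 * T / p : ℝ) : ℂ) * (Complex.I * ω) = (θ : ℂ) * Complex.I := by
    rw [hθ]; push_cast; ring
  rw [hz, Complex.exp_mul_I] at heq
  have hsq : (Complex.I * (ω:ℂ)) ^ 2 = ((-(ω^2) : ℝ) : ℂ) := by
    push_cast; rw [mul_pow, Complex.I_sq]; ring
  rw [hsq] at heq
  have hre := congrArg Complex.re heq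
  have him := congrArg Complex.im heq
  simp [Complex.cos_ofReal_re, Complex.sin_ofReal_re, ← Complex.ofReal_pow] at hre him
  have hτ0 : τ ≠ 0 := by
    intro h
    rw [h] at hre
    simp at hre
    nlinarith
  have hsin : Real.sin θ = 0 := him.resolve_right hτ0
  obtain ⟨k, hk⟩ := Real.sin_eq_zero_iff.mp hsin
  have hθk : θ = k * Real.pi := hk.symm
  have hcos : Real.cos θ = (-1 : ℝ) ^ k := by
    rw [hθk]
    simpa using Real.cos_add_int_mul_pi 0 k
  have hθ0 : θ ≠ 0 := by
    rw [hθ]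
    exact mul_ne_zero (div_ne_zero (by positivity) (ne_of_gt hp)) hω
  have hk0 : k ≠ 0 := by
    intro h
    apply hθ0
    rw [hθk, h]
    simp
  have hodd : Odd k := by
    rcases Int.even_or_odd k with he | ho
    · exfalso
      rw [he.neg_one_zpow] at hcos
      rw [hcos] at hre
      nlinarith
    · exact ho
  have hcosm : Real.cos θ = -1 := by rw [hcos, hodd.neg_one_zpow]
  rw [hcosm] at hre
  have hωτ : ω ^ 2 = -(1/6) * p ^ 2 * β := by rw [hτ] at hre; linarith
  have hβ : β < 0 := by
    have hp2 : 0 < p ^ 2 := by positivity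
    nlinarith
  have hsqθ : (2 * T / p * ω) ^ 2 = (k:ℝ) ^ 2 * Real.pi ^ 2 := by
    rw [← hθ, hθk]; ring
  have hmain : (2/3) * (-β) * T ^ 2 = (k : ℝ) ^ 2 * Real.pi ^ 2 := by
    rw [← hsqθ]
    field_simp
    nlinarith [hωτ]
  refine ⟨⟨k, hk0, hodd, ?_, hωτ, hmain⟩, hβ, ?_⟩
  · exact hθk
  · have h5 : (1:ℤ) ≤ k ^ 2 := by
      rcases lt_or_gt_of_ne hk0 with h | h <;> nlinarith
    have h4 : (1:ℝ) ≤ (k:ℝ) ^ 2 := by exact_mod_cast h5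
    have hpi : 0 < Real.pi ^ 2 := by positivity
    nlinarith [hmain]
end
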